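/- [Maximum crossing number theorem] Let t ≥ 1 and n ≥ 2, and let k ≥ 1 be a natural number. If a tromino tiling of the 3t×n rectangle R(3t,n) has the property that every interior horizontal grid line and every interior vertical grid line is crossed by at least k tiles, then k ≤ 2t − 1 and 3k ≤ 2n. -/

import Mathlib

/-- The m×n rectangle: cells {0,…,m−1}×{0,…,n−1}. -/
def rect (m n : ℕ) : Finset (ℕ × ℕ) := Finset.range m ×ˢ Finset.range n

/-- The 2×2 block with top-left corner (i,j). -/
def block (i j : ℕ) : Finset (ℕ × ℕ) :=
  {(i, j), (i, j + 1), (i + 1, j), (i + 1, j + 1)}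

/-- An L-tromino: a 2×2 block minus one of its cells. -/
def IsLTromino (T : Finset (ℕ × ℕ)) : Prop :=
  ∃ i j c, c ∈ block i j ∧ T = block i j \ {c}

/-- A tromino tiling of R(m,n): a partition of the rectangle into L-trominoes. -/
def IsTrominoTiling (m n : ℕ) (𝒯 : Finset (Finset (ℕ × ℕ))) : Prop :=
  (∀ T ∈ 𝒯, IsLTromino T) ∧
  (∀ T₁ ∈ 𝒯, ∀ T₂ ∈ 𝒯, T₁ ≠ T₂ → Disjoint T₁ T₂) ∧
  𝒯.sup id = rect m n

/-- Tile T crosses the i-th horizontal grid line. -/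
def CrossesH (T : Finset (ℕ × ℕ)) (i : ℕ) : Prop :=
  (∃ c ∈ T, c.1 < i) ∧ (∃ c ∈ T, i ≤ c.1)

/-- Tile T crosses the j-th vertical grid line. -/
def CrossesV (T : Finset (ℕ × ℕ)) (j : ℕ) : Prop :=
  (∃ c ∈ T, c.2 < j) ∧ (∃ c ∈ T, j ≤ c.2)

/-- A tiling of R(m,n) is faultfree if every interior horizontal and vertical
grid line is crossed by some tile. -/
def IsFaultfree (m n : ℕ) (𝒯 : Finset (Finset (ℕ × ℕ))) : Prop :=
  (∀ i, 0 < i → i < m → ∃ T ∈ 𝒯, CrossesH T i) ∧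
  (∀ j, 0 < j → j < n → ∃ T ∈ 𝒯, CrossesV T j)

open Classical in
/-- The number of tiles of 𝒯 crossing the i-th horizontal grid line. -/
noncomputable def crossCountH (𝒯 : Finset (Finset (ℕ × ℕ))) (i : ℕ) : ℕ :=
  (𝒯.filter fun T => CrossesH T i).card

open Classical in
/-- The number of tiles of 𝒯 crossing the j-th vertical grid line. -/
noncomputable def crossCountV (𝒯 : Finset (Finset (ℕ × ℕ))) (j : ℕ) : ℕ :=
  (𝒯.filter fun T => CrossesV T j).card

/-!
Each L-tromino lies in a 2×2 block, so a tile crossing a grid line lies in the two rows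
(or columns) next to it, and no tile crosses two consecutive parallel lines. As the tiles are
disjoint with three cells each, the `c` tiles crossing horizontal line 1 fill `3c` of the `2n`
cells of rows 0 and 1, so `3k ≤ 2n`; the tiles crossing vertical lines 1 and 2 fill
`3(c₁ + c₂)` of the `9t` cells of columns 0, 1, 2, so `2k ≤ 3t` when `n ≥ 3`. When `n ≤ 2`,
the first bound already forces `k ≤ 1`.
-/

namespace IsLTromino

variable {T : Finset (ℕ × ℕ)}

theorem card_eq_three (hT : IsLTromino T) : T.card = 3 := by
  obtain ⟨i, j, c, hc, rfl⟩ := hT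
  rw [Finset.card_sdiff_of_subset (Finset.singleton_subset_iff.mpr hc), Finset.card_singleton]
  simp [block, Prod.ext_iff]

theorem exists_subset_product (hT : IsLTromino T) :
    ∃ i j, T ⊆ ({i, i + 1} : Finset ℕ) ×ˢ ({j, j + 1} : Finset ℕ) := by
  obtain ⟨i, j, c, -, rfl⟩ := hT
  refine ⟨i, j, Finset.sdiff_subset.trans fun d hd => ?_⟩
  simp only [block, Finset.mem_insert, Finset.mem_singleton] at hd
  rcases hd with rfl | rfl | rfl | rfl <;> simp

theorem fst_mem_of_crossesH {i : ℕ} (hT : IsLTromino T) (hi : CrossesH T i) {c : ℕ × ℕ}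
    (hc : c ∈ T) : c.1 + 1 = i ∨ c.1 = i := by
  obtain ⟨a, b, hab⟩ := hT.exists_subset_product
  obtain ⟨⟨c₁, hc₁, hlt⟩, ⟨c₂, hc₂, hle⟩⟩ := hi
  have h := Finset.mem_product.mp (hab hc)
  have h₁ := Finset.mem_product.mp (hab hc₁)
  have h₂ := Finset.mem_product.mp (hab hc₂)
  simp only [Finset.mem_insert, Finset.mem_singleton] at h h₁ h₂
  omega

theorem snd_mem_of_crossesV {j : ℕ} (hT : IsLTromino T) (hj : CrossesV T j) {c : ℕ × ℕ}
    (hc : c ∈ T) : c.2 + 1 = j ∨ c.2 = j := by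
  obtain ⟨a, b, hab⟩ := hT.exists_subset_product
  obtain ⟨⟨c₁, hc₁, hlt⟩, ⟨c₂, hc₂, hle⟩⟩ := hj
  have h := Finset.mem_product.mp (hab hc)
  have h₁ := Finset.mem_product.mp (hab hc₁)
  have h₂ := Finset.mem_product.mp (hab hc₂)
  simp only [Finset.mem_insert, Finset.mem_singleton] at h h₁ h₂
  omega

theorem not_crossesV_succ {j : ℕ} (hT : IsLTromino T) (hj : CrossesV T j) :
    ¬ CrossesV T (j + 1) := by
  rintro ⟨-, c, hc, hle⟩
  have := hT.snd_mem_of_crossesV hj hc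
  omega

end IsLTromino

namespace IsTrominoTiling

variable {m n : ℕ} {𝒯 : Finset (Finset (ℕ × ℕ))}

theorem subset_rect (h : IsTrominoTiling m n 𝒯) {T : Finset (ℕ × ℕ)} (hT : T ∈ 𝒯) :
    T ⊆ rect m n :=
  h.2.2 ▸ Finset.le_sup (f := id) hT

theorem three_mul_card_le (h : IsTrominoTiling m n 𝒯) {𝒮 : Finset (Finset (ℕ × ℕ))}
    (h𝒮 : 𝒮 ⊆ 𝒯) {A : Finset (ℕ × ℕ)} (hA : ∀ T ∈ 𝒮, T ⊆ A) : 3 * 𝒮.card ≤ A.card := by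
  classical
  have hdisj : (𝒮 : Set (Finset (ℕ × ℕ))).PairwiseDisjoint id :=
    fun T₁ h₁ T₂ h₂ hne => h.2.1 T₁ (h𝒮 h₁) T₂ (h𝒮 h₂) hne
  calc 3 * 𝒮.card = (𝒮.biUnion id).card := by
        rw [Finset.card_biUnion hdisj]
        dsimp only [id]
        rw [Finset.sum_congr rfl fun T hT => (h.1 T (h𝒮 hT)).card_eq_three,
          Finset.sum_const, smul_eq_mul, mul_comm]
    _ ≤ A.card := Finset.card_le_card (Finset.biUnion_subset.mpr hA)

theorem three_mul_crossCountH_le (h : IsTrominoTiling m n 𝒯) (i : ℕ) :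
    3 * crossCountH 𝒯 i ≤ 2 * n := by
  classical
  calc 3 * crossCountH 𝒯 i ≤ (({i - 1, i} : Finset ℕ) ×ˢ Finset.range n).card := by
        refine h.three_mul_card_le (Finset.filter_subset _ _) fun T hT c hc => ?_
        obtain ⟨hT𝒯, hi⟩ := Finset.mem_filter.mp hT
        have hrow := (h.1 T hT𝒯).fst_mem_of_crossesH hi hc
        have hcol := (Finset.mem_product.mp (h.subset_rect hT𝒯 hc)).2
        simp only [Finset.mem_product, Finset.mem_insert, Finset.mem_singleton]
        exact ⟨by omega, hcol⟩
    _ ≤ 2 * n := by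
        rw [Finset.card_product, Finset.card_range]
        exact Nat.mul_le_mul_right n Finset.card_le_two

theorem crossCountV_add_crossCountV_succ_le (h : IsTrominoTiling m n 𝒯) (j : ℕ) :
    crossCountV 𝒯 j + crossCountV 𝒯 (j + 1) ≤ m := by
  classical
  set 𝒮 := 𝒯.filter fun T => CrossesV T j
  set 𝒮' := 𝒯.filter fun T => CrossesV T (j + 1)
  have hdisj : Disjoint 𝒮 𝒮' :=
    Finset.disjoint_filter.mpr fun T hT => (h.1 T hT).not_crossesV_succ
  have hcard : (𝒮 ∪ 𝒮').card = crossCountV 𝒯 j + crossCountV 𝒯 (j + 1) :=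
    Finset.card_union_of_disjoint hdisj
  have hsub : 𝒮 ∪ 𝒮' ⊆ 𝒯 :=
    Finset.union_subset (Finset.filter_subset _ _) (Finset.filter_subset _ _)
  have hbound : 3 * (𝒮 ∪ 𝒮').card ≤ (Finset.range m ×ˢ ({j - 1, j, j + 1} : Finset ℕ)).card := by
    refine h.three_mul_card_le hsub fun T hT c hc => ?_
    have hcol : c.2 + 1 = j ∨ c.2 = j ∨ c.2 = j + 1 := by
      rcases Finset.mem_union.mp hT with hT | hT <;>
        obtain ⟨hT𝒯, hj⟩ := Finset.mem_filter.mp hT <;>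
        have := (h.1 T hT𝒯).snd_mem_of_crossesV hj hc <;>
        omega
    have hrow := (Finset.mem_product.mp (h.subset_rect (hsub hT) hc)).1
    simp only [Finset.mem_product, Finset.mem_insert, Finset.mem_singleton]
    exact ⟨hrow, by omega⟩
  rw [Finset.card_product, Finset.card_range] at hbound
  have hcols : ({j - 1, j, j + 1} : Finset ℕ).card ≤ 3 := Finset.card_le_three
  have := hbound.trans (Nat.mul_le_mul_left m hcols)
  omega

end IsTrominoTiling

theorem maximum_crossing_number_general (t n k : ℕ) (ht : 1 ≤ t)
    (𝒯 : Finset (Finset (ℕ × ℕ))) (hT : IsTrominoTiling (3 * t) n 𝒯)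
    (hH : ∀ i, 0 < i → i < 3 * t → k ≤ crossCountH 𝒯 i)
    (hV : ∀ j, 0 < j → j < n → k ≤ crossCountV 𝒯 j) :
    k ≤ 2 * t - 1 ∧ 3 * k ≤ 2 * n := by
  have h3k : 3 * k ≤ 2 * n :=
    (Nat.mul_le_mul_left 3 (hH 1 one_pos (by omega))).trans (hT.three_mul_crossCountH_le 1)
  refine ⟨?_, h3k⟩
  rcases le_or_gt n 2 with hn | hn
  · omega
  · have h₁ := hV 1 one_pos (by omega)
    have h₂ := hV 2 two_pos hn
    have h₁₂ : crossCountV 𝒯 1 + crossCountV 𝒯 2 ≤ 3 * t :=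
      hT.crossCountV_add_crossCountV_succ_le 1
    omega

/-- STATEMENT 3 [Maximum crossing number theorem]: if every interior grid line of
a tromino tiling of R(3t,n) is crossed by at least k tiles (t ≥ 1, n ≥ 2, k ≥ 1),
then k ≤ 2t − 1 and 3k ≤ 2n. -/
theorem maximum_crossing_number (t n k : ℕ) (ht : 1 ≤ t) (hn : 2 ≤ n) (hk : 1 ≤ k)
    (𝒯 : Finset (Finset (ℕ × ℕ))) (hT : IsTrominoTiling (3 * t) n 𝒯)
    (hH : ∀ i, 0 < i → i < 3 * t → k ≤ crossCountH 𝒯 i)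
    (hV : ∀ j, 0 < j → j < n → k ≤ crossCountV 𝒯 j) :
    k ≤ 2 * t - 1 ∧ 3 * k ≤ 2 * n :=
  maximum_crossing_number_general t n k ht 𝒯 hT hH hV
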